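/- arXiv:2110.07673 — 3 statements merged into one kernel-verified Lean document; each statement's English description precedes it below -/
import Mathlib

section
/- Let m, k ≥ 1 and A, B ≥ 0 be integers. If A + B = C(m+k, k) − 1, then A^{-<m>} + B_{<k>} = C(m+k−1, k) − 1 (with the convention that 0^{-<m>} = 0_{<k>} = 0). -/
/-- Binomial coefficient with the convention `C(a, b) = 0` whenever `b = 0`
(the convention `C(a, b) = 0` for `a < b` is already built into `Nat.choose`). -/
def mchoose (a b : ℕ) : ℕ := if b = 0 then 0 else Nat.choose a b

/-- `IsMacaulayRep A n δ c` says that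
`A = C(c n, n) + C(c (n-1), n-1) + ⋯ + C(c δ, δ)` is the `n`-th Macaulay
representation of `A`, i.e. `1 ≤ δ ≤ n`, `c j ≥ j` for `δ ≤ j ≤ n`, and the
`c j` are strictly increasing in `j` on `[δ, n]`. -/
def IsMacaulayRep (A n δ : ℕ) (c : ℕ → ℕ) : Prop :=
  1 ≤ δ ∧ δ ≤ n ∧ (∀ j, δ ≤ j → j ≤ n → j ≤ c j) ∧
    (∀ j, δ ≤ j → j < n → c j < c (j + 1)) ∧
    A = ∑ j ∈ Finset.Icc δ n, Nat.choose (c j) j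

/-- `IsMacaulayLower A n v` says that `v = A_{<n>} = C(a_n - 1, n) + ⋯ + C(a_δ - 1, δ)`,
computed from the `n`-th Macaulay representation of `A`, with the convention `0_{<n>} = 0`. -/
def IsMacaulayLower (A n v : ℕ) : Prop :=
  (A = 0 ∧ v = 0) ∨
    ∃ δ c, IsMacaulayRep A n δ c ∧ v = ∑ j ∈ Finset.Icc δ n, Nat.choose (c j - 1) j

/-- `IsMacaulayMinus A n v` says that `v = A^{-<n>} = C(a_n - 1, n-1) + ⋯ + C(a_δ - 1, δ-1)`,
computed from the `n`-th Macaulay representation of `A`, with the convention `0^{-<n>} = 0`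
(and `C(a, 0) = 0`). -/
def IsMacaulayMinus (A n v : ℕ) : Prop :=
  (A = 0 ∧ v = 0) ∨
    ∃ δ c, IsMacaulayRep A n δ c ∧ v = ∑ j ∈ Finset.Icc δ n, mchoose (c j - 1) (j - 1)

/-- `IsMacaulayUpper A n v` says that `v = A^{<n>} = C(a_n + 1, n+1) + ⋯ + C(a_δ + 1, δ+1)`,
computed from the `n`-th Macaulay representation of `A`, with the convention `0^{<n>} = 0`. -/
def IsMacaulayUpper (A n v : ℕ) : Prop :=
  (A = 0 ∧ v = 0) ∨
    ∃ δ c, IsMacaulayRep A n δ c ∧ v = ∑ j ∈ Finset.Icc δ n, Nat.choose (c j + 1) (j + 1)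

/-!
The top coefficient `a` of the `n`-th Macaulay representation of `A` is determined by
`C(a, n) ≤ A < C(a+1, n)`, so both Macaulay functionals can be computed greedily, and
`C(m+k, k) = C(m+k-1, k-1) + C(m+k-1, k)`. If `B ≥ C(m+k-1, k)`, the top coefficient of `B`
is `m+k-1`; removing that term leaves `A + B' = C(m+k-1, k-1) - 1`, the same situation
with `k - 1`. Otherwise `A ≥ C(m+k-1, m)`, the top coefficient of `A` is `m+k-1`, and
removing it leads to the situation with `m - 1`. In both cases Pascal's rule reassembles
the right-hand side, so induction on `m + k` concludes.
-/

open Finset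

namespace IsMacaulayRep

variable {A n δ : ℕ} {c : ℕ → ℕ}

theorem choose_top_le (h : IsMacaulayRep A n δ c) : (c n).choose n ≤ A := by
  obtain ⟨-, hδn, -, -, rfl⟩ := h
  exact single_le_sum (f := fun j => (c j).choose j) (fun _ _ => Nat.zero_le _)
    (mem_Icc.2 ⟨hδn, le_rfl⟩)

theorem pos (h : IsMacaulayRep A n δ c) : 0 < A :=
  (Nat.choose_pos (h.2.2.1 n h.2.1 le_rfl)).trans_le h.choose_top_le

theorem tail (h : IsMacaulayRep A (n + 1) δ c) (hδ : δ ≤ n) :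
    IsMacaulayRep (A - (c (n + 1)).choose (n + 1)) n δ c := by
  obtain ⟨h1, h2, h3, h4, rfl⟩ := h
  refine ⟨h1, hδ, fun j hj hjn => h3 j hj (by omega), fun j hj hjn => h4 j hj (by omega), ?_⟩
  rw [sum_Icc_succ_top h2, Nat.add_sub_cancel]

theorem eq_choose_top_of_lowest_eq (h : IsMacaulayRep A n δ c) (hδ : δ = n) :
    A = (c n).choose n := by
  obtain ⟨-, -, -, -, rfl⟩ := h
  rw [hδ, Icc_self, sum_singleton]

theorem lt_choose_succ_top (h : IsMacaulayRep A n δ c) : A < (c n + 1).choose n := by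
  induction n generalizing A with
  | zero => exact absurd (h.1.trans h.2.1) (by omega)
  | succ n ih =>
    have hpascal := Nat.choose_succ_succ' (c (n + 1)) n
    have hpos : 0 < (c (n + 1)).choose n :=
      Nat.choose_pos ((Nat.le_succ n).trans (h.2.2.1 (n + 1) h.2.1 le_rfl))
    rcases h.2.1.eq_or_lt with hδ | hδ
    · have := h.eq_choose_top_of_lowest_eq hδ
      omega
    · have htail := ih (h.tail (by omega))
      have hmono : (c n + 1).choose n ≤ (c (n + 1)).choose n :=
        Nat.choose_le_choose n (h.2.2.2.1 n (by omega) (by omega))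
      have := h.choose_top_le
      omega

theorem top_eq {x : ℕ} (h : IsMacaulayRep A n δ c) (hle : x.choose n ≤ A)
    (hlt : A < (x + 1).choose n) : c n = x := by
  have h1 : c n < x + 1 := lt_of_not_ge fun hx =>
    (h.choose_top_le.trans_lt hlt).not_ge (Nat.choose_le_choose n hx)
  have h2 : x < c n + 1 := lt_of_not_ge fun hx =>
    (hle.trans_lt h.lt_choose_succ_top).not_ge (Nat.choose_le_choose n hx)
  omega

end IsMacaulayRep

/-- `IsMacaulayLower` and `IsMacaulayMinus` unfold to this with `f a j = C(a - 1, j)` and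
`f a j = mchoose (a - 1) (j - 1)` respectively. -/
def IsMacaulaySum (f : ℕ → ℕ → ℕ) (A n v : ℕ) : Prop :=
  (A = 0 ∧ v = 0) ∨ ∃ δ c, IsMacaulayRep A n δ c ∧ v = ∑ j ∈ Icc δ n, f (c j) j

namespace IsMacaulaySum

variable {f : ℕ → ℕ → ℕ} {A n v : ℕ}

theorem eq_zero_of_zero (h : IsMacaulaySum f 0 n v) : v = 0 := by
  rcases h with ⟨-, rfl⟩ | ⟨δ, c, hrep, -⟩
  · rfl
  · exact absurd hrep.pos (lt_irrefl 0)

theorem peel {x : ℕ} (h : IsMacaulaySum f A (n + 1) v) (hx : n + 1 ≤ x)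
    (hle : x.choose (n + 1) ≤ A) (hlt : A < (x + 1).choose (n + 1)) :
    ∃ v', IsMacaulaySum f (A - x.choose (n + 1)) n v' ∧ v = f x (n + 1) + v' := by
  rcases h with ⟨rfl, -⟩ | ⟨δ, c, hrep, rfl⟩
  · exact absurd hle (Nat.choose_pos hx).not_ge
  obtain rfl := hrep.top_eq hle hlt
  rcases hrep.2.1.eq_or_lt with hδ | hδ
  · refine ⟨0, Or.inl ⟨by rw [hrep.eq_choose_top_of_lowest_eq hδ, Nat.sub_self], rfl⟩, ?_⟩
    rw [hδ, Icc_self, sum_singleton, add_zero]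
  · refine ⟨_, Or.inr ⟨δ, c, hrep.tail (by omega), rfl⟩, ?_⟩
    rw [sum_Icc_succ_top hrep.2.1, add_comm]

end IsMacaulaySum

theorem mchoose_add_choose_succ_sub_one (m k : ℕ) :
    mchoose (m + k) m + ((m + k).choose (k + 1) - 1) = (m + k + 1).choose (k + 1) - 1 := by
  cases m with
  | zero => simp [mchoose]
  | succ m =>
    have hsymm : (m + 1 + k).choose (m + 1) = (m + 1 + k).choose k := Nat.choose_symm_add
    have hpascal := Nat.choose_succ_succ' (m + 1 + k) k
    have hpos : 0 < (m + 1 + k).choose (k + 1) := Nat.choose_pos (by omega)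
    simp only [mchoose, Nat.add_one_ne_zero, if_false]
    omega

def MacaulayKeyIdentity (m k : ℕ) : Prop :=
  ∀ A B Am Bk : ℕ, A + B = (m + k).choose k - 1 →
    IsMacaulaySum (fun a j => mchoose (a - 1) (j - 1)) A m Am →
    IsMacaulaySum (fun a j => (a - 1).choose j) B k Bk →
    Am + Bk = (m + k - 1).choose k - 1

namespace MacaulayKeyIdentity

theorem of_choose_le_one {m k : ℕ} (h : (m + k).choose k ≤ 1) : MacaulayKeyIdentity m k := by
  intro A B Am Bk hAB hA hB
  obtain ⟨rfl, rfl⟩ : A = 0 ∧ B = 0 := by omega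
  have : (m + k - 1).choose k ≤ (m + k).choose k := Nat.choose_le_choose k (Nat.sub_le _ _)
  rw [hA.eq_zero_of_zero, hB.eq_zero_of_zero]
  omega

theorem succ_succ {m k : ℕ} (hk : MacaulayKeyIdentity (m + 1) k)
    (hm : MacaulayKeyIdentity m (k + 1)) : MacaulayKeyIdentity (m + 1) (k + 1) := by
  intro A B Am Bk hAB hA hB
  rw [show m + 1 + (k + 1) = m + k + 1 + 1 by omega] at hAB ⊢
  rw [Nat.add_sub_cancel]
  have hpascal := Nat.choose_succ_succ' (m + k + 1) k
  have hpos : 0 < (m + k + 1).choose k := Nat.choose_pos (by omega)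
  rcases le_or_gt ((m + k + 1).choose (k + 1)) B with hBtop | hBtop
  · obtain ⟨Bk', hB', rfl⟩ := hB.peel (x := m + k + 1) (by omega) hBtop (by omega)
    have ih := hk _ _ Am Bk' (by rw [show m + 1 + k = m + k + 1 by omega]; omega) hA hB'
    have hpascal' := Nat.choose_succ_succ' (m + k) k
    have hpos' : 0 < (m + k).choose k := Nat.choose_pos (by omega)
    simp only [show m + 1 + k - 1 = m + k by omega, Nat.add_sub_cancel] at ih ⊢
    omega
  · have hsymm : (m + k + 1).choose k = (m + k + 1).choose (m + 1) := by
      rw [show m + k + 1 = m + 1 + k by omega, Nat.choose_symm_add]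
    have hsymm' : (m + k + 1 + 1).choose (k + 1) = (m + k + 1 + 1).choose (m + 1) := by
      rw [show m + k + 1 + 1 = m + 1 + (k + 1) by omega, Nat.choose_symm_add]
    obtain ⟨Am', hA', rfl⟩ := hA.peel (x := m + k + 1) (by omega) (by omega) (by omega)
    have ih := hm _ B Am' Bk (by rw [← add_assoc]; omega) hA' hB
    have := mchoose_add_choose_succ_sub_one m k
    simp only [show m + (k + 1) - 1 = m + k by omega, Nat.add_sub_cancel] at ih ⊢
    omega

theorem holds (m k : ℕ) : MacaulayKeyIdentity m k := by
  induction m generalizing k with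
  | zero => exact of_choose_le_one (by simp)
  | succ m ihm =>
    induction k with
    | zero => exact of_choose_le_one (by simp)
    | succ k ihk => exact succ_succ ihk (ihm (k + 1))

end MacaulayKeyIdentity

theorem macaulay_key_lemma_general (m k A B Am Bk : ℕ)
    (hAB : A + B = Nat.choose (m + k) k - 1)
    (hA : IsMacaulayMinus A m Am) (hB : IsMacaulayLower B k Bk) :
    Am + Bk = Nat.choose (m + k - 1) k - 1 :=
  MacaulayKeyIdentity.holds m k A B Am Bk hAB hA hB

/-- **Key combinatorial lemma.** If `m, k ≥ 1`, `A, B ≥ 0` and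
`A + B = C(m+k, k) - 1`, then `A^{-<m>} + B_{<k>} = C(m+k-1, k) - 1`,
with the convention `0^{-<m>} = 0_{<k>} = 0`. -/
theorem macaulay_key_lemma (m k A B Am Bk : ℕ) (hm : 1 ≤ m) (hk : 1 ≤ k)
    (hAB : A + B = Nat.choose (m + k) k - 1)
    (hA : IsMacaulayMinus A m Am) (hB : IsMacaulayLower B k Bk) :
    Am + Bk = Nat.choose (m + k - 1) k - 1 :=
  macaulay_key_lemma_general m k A B Am Bk hAB hA hB
end

section
/- Let n ≥ 1, a ≥ 0, b ≥ 0 be integers with b ≤ n − a − 1. Then N(n; a, b)^{-<n>} = N(n−1; a, b) if n − a − b ≥ 2, and N(n; a, b)^{-<n>} = N(n−1; a, b−1) if n − a − b = 1 and b ≥ 1. -/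
/-- `Nval n a b = N(n; a, b) = C(n+1, n) + C(n, n-1) + ⋯ + C(n-a+1, n-a) + b
= (a+1)(n+1) - a(a+1)/2 + b`. -/
def Nval (n a b : ℕ) : ℕ := (a + 1) * (n + 1) - a * (a + 1) / 2 + b


section MacaulayAux

/-- The canonical coefficient function for `Nval n a b`. -/
def dfun (m : ℕ) : ℕ → ℕ := fun j => if j < m then j else j + 1

lemma single_lt_aux (δ m : ℕ) (hδ : 1 ≤ δ) (hm : δ ≤ m) :
    Nat.choose m δ < Nat.choose (m + 1) δ := by
  obtain ⟨e, rfl⟩ : ∃ e, δ = e + 1 := ⟨δ - 1, by omega⟩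
  have hps := Nat.choose_succ_succ m e
  simp only [Nat.succ_eq_add_one] at hps
  have := Nat.choose_pos (show e ≤ m by omega)
  omega

lemma sum_lt_aux (δ : ℕ) (c : ℕ → ℕ) (hδ : 1 ≤ δ) :
    ∀ n, δ ≤ n → (∀ j, δ ≤ j → j ≤ n → j ≤ c j) →
      (∀ j, δ ≤ j → j < n → c j < c (j + 1)) →
      ∑ j ∈ Finset.Icc δ n, Nat.choose (c j) j < Nat.choose (c n + 1) n := by
  intro n
  induction n with
  | zero => intro h; omega
  | succ n ih =>
    intro h hb hs
    rcases eq_or_lt_of_le h with heq | hlt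
    · rw [← heq, Finset.Icc_self, Finset.sum_singleton]
      exact single_lt_aux δ (c δ) hδ (hb δ le_rfl h)
    · have h' : δ ≤ n := by omega
      rw [Finset.sum_Icc_succ_top h]
      have h1 := ih h' (fun j hj hj' => hb j hj (by omega)) (fun j hj hj' => hs j hj (by omega))
      have h2 : c n + 1 ≤ c (n + 1) := hs n h' (by omega)
      have h3 : Nat.choose (c n + 1) n ≤ Nat.choose (c (n + 1)) n := Nat.choose_le_choose n h2
      have hps := Nat.choose_succ_succ (c (n + 1)) n
      simp only [Nat.succ_eq_add_one] at hps
      omega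

lemma rep_unique_aux : ∀ n A δ c δ' c', IsMacaulayRep A n δ c → IsMacaulayRep A n δ' c' →
    δ = δ' ∧ ∀ j, δ ≤ j → j ≤ n → c j = c' j := by
  intro n
  induction n with
  | zero =>
    intro A δ c δ' c' h _
    obtain ⟨h1, h2, _⟩ := h
    omega
  | succ n ih =>
    intro A δ c δ' c' h h'
    obtain ⟨hδ1, hδn, hb, hs, hA⟩ := h
    obtain ⟨hδ1', hδn', hb', hs', hA'⟩ := h'
    have hub : A < Nat.choose (c (n + 1) + 1) (n + 1) :=
      hA ▸ sum_lt_aux δ c hδ1 (n + 1) hδn hb hs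
    have hub' : A < Nat.choose (c' (n + 1) + 1) (n + 1) :=
      hA' ▸ sum_lt_aux δ' c' hδ1' (n + 1) hδn' hb' hs'
    have hlb : Nat.choose (c (n + 1)) (n + 1) ≤ A := by
      rw [hA]
      exact Finset.single_le_sum (f := fun j => Nat.choose (c j) j)
        (fun i _ => Nat.zero_le _) (Finset.mem_Icc.mpr ⟨hδn, le_rfl⟩)
    have hlb' : Nat.choose (c' (n + 1)) (n + 1) ≤ A := by
      rw [hA']
      exact Finset.single_le_sum (f := fun j => Nat.choose (c' j) j)
        (fun i _ => Nat.zero_le _) (Finset.mem_Icc.mpr ⟨hδn', le_rfl⟩)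
    have htop : c (n + 1) = c' (n + 1) := by
      rcases lt_trichotomy (c (n + 1)) (c' (n + 1)) with hl | he | hl
      · have := Nat.choose_le_choose (n + 1) (show c (n + 1) + 1 ≤ c' (n + 1) from hl)
        omega
      · exact he
      · have := Nat.choose_le_choose (n + 1) (show c' (n + 1) + 1 ≤ c (n + 1) from hl)
        omega
    by_cases hdq : δ = n + 1
    · by_cases hdq' : δ' = n + 1
      · subst hdq; subst hdq'
        refine ⟨rfl, fun j hj hj' => ?_⟩
        have : j = n + 1 := by omega
        rw [this, htop]
      · exfalso
        subst hdq
        have hd' : δ' ≤ n := by omega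
        rw [Finset.Icc_self, Finset.sum_singleton] at hA
        rw [Finset.sum_Icc_succ_top hδn'] at hA'
        have hpos : 0 < ∑ j ∈ Finset.Icc δ' n, Nat.choose (c' j) j :=
          Finset.sum_pos (fun i hi => Nat.choose_pos (hb' i (Finset.mem_Icc.mp hi).1
            (by have := (Finset.mem_Icc.mp hi).2; omega)))
            (Finset.nonempty_Icc.mpr hd')
        rw [htop] at hA
        omega
    · by_cases hdq' : δ' = n + 1
      · exfalso
        subst hdq'
        have hd : δ ≤ n := by omega
        rw [Finset.Icc_self, Finset.sum_singleton] at hA'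
        rw [Finset.sum_Icc_succ_top hδn] at hA
        have hpos : 0 < ∑ j ∈ Finset.Icc δ n, Nat.choose (c j) j :=
          Finset.sum_pos (fun i hi => Nat.choose_pos (hb i (Finset.mem_Icc.mp hi).1
            (by have := (Finset.mem_Icc.mp hi).2; omega)))
            (Finset.nonempty_Icc.mpr hd)
        rw [htop] at hA
        omega
      have hd : δ ≤ n := by omega
      have hd' : δ' ≤ n := by omega
      rw [Finset.sum_Icc_succ_top hδn] at hA
      rw [Finset.sum_Icc_succ_top hδn'] at hA'
      have h₁ : IsMacaulayRep (∑ j ∈ Finset.Icc δ n, Nat.choose (c j) j) n δ c :=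
        ⟨hδ1, hd, fun j hj hj' => hb j hj (by omega), fun j hj hj' => hs j hj (by omega), rfl⟩
      have h₂ : IsMacaulayRep (∑ j ∈ Finset.Icc δ n, Nat.choose (c j) j) n δ' c' := by
        refine ⟨hδ1', hd', fun j hj hj' => hb' j hj (by omega),
          fun j hj hj' => hs' j hj (by omega), ?_⟩
        rw [htop] at hA
        omega
      obtain ⟨hde, hce⟩ := ih _ δ c δ' c' h₁ h₂
      refine ⟨hde, fun j hj hj' => ?_⟩
      rcases eq_or_lt_of_le hj' with heq2 | hlt2
      · rw [heq2, htop]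
      · exact hce j hj (by omega)

lemma icc_split_aux (f : ℕ → ℕ) (δ m n : ℕ) (h1 : δ ≤ m) (h2 : m ≤ n + 1) (h3 : 1 ≤ m) :
    ∑ j ∈ Finset.Icc δ n, f j =
      ∑ j ∈ Finset.Icc δ (m - 1), f j + ∑ j ∈ Finset.Icc m n, f j := by
  rw [← Finset.sum_union]
  · congr 1
    ext x
    simp only [Finset.mem_union, Finset.mem_Icc]
    omega
  · rw [Finset.disjoint_left]
    intro x hx hx'
    simp only [Finset.mem_Icc] at hx hx'
    omega

lemma gauss_mul_two (a e : ℕ) :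
    (∑ j ∈ Finset.Icc e (a + e), j) * 2 = (2 * e + a) * (a + 1) := by
  induction a with
  | zero => simp; ring
  | succ a ih =>
    have hstep : a + 1 + e = (a + e) + 1 := by omega
    rw [hstep, Finset.sum_Icc_succ_top (by omega)]
    have hid : (2 * e + (a + 1)) * (a + 1 + 1) = (2 * e + a) * (a + 1) + 2 * (a + e + 1) := by
      ring
    omega

lemma gauss1 (a n : ℕ) (h : a ≤ n) :
    ∑ j ∈ Finset.Icc (n - a) n, (j + 1) = (a + 1) * (n + 1) - a * (a + 1) / 2 := by
  obtain ⟨e, rfl⟩ : ∃ e, n = a + e := ⟨n - a, by omega⟩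
  have hd : a + e - a = e := by omega
  rw [hd]
  have h2 := gauss_mul_two a e
  have hc : (Finset.Icc e (a + e)).card = a + 1 := by rw [Nat.card_Icc]; omega
  have hsum : ∑ j ∈ Finset.Icc e (a + e), (j + 1) =
      (∑ i ∈ Finset.Icc e (a + e), i) + (a + 1) := by
    rw [Finset.sum_add_distrib, Finset.sum_const, hc, smul_eq_mul, mul_one]
  have hT : a * (a + 1) / 2 * 2 = a * (a + 1) :=
    Nat.div_mul_cancel (Nat.even_mul_succ_self a).two_dvd
  have key : (2 * e + a) * (a + 1) + 2 * (a + 1) + a * (a + 1) =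
      2 * ((a + 1) * (a + e + 1)) := by ring
  have hP : (a + 1) * (a + e + 1) =
      (∑ i ∈ Finset.Icc e (a + e), i) + (a + 1) + a * (a + 1) / 2 := by linarith
  rw [hsum, hP, Nat.add_sub_cancel]

lemma gauss2 (a n : ℕ) (h : a + 1 ≤ n) :
    ∑ j ∈ Finset.Icc (n - a) n, j = (a + 1) * n - a * (a + 1) / 2 := by
  obtain ⟨e, rfl⟩ : ∃ e, n = a + e := ⟨n - a, by omega⟩
  have hd : a + e - a = e := by omega
  rw [hd]
  have h2 := gauss_mul_two a e
  have hT : a * (a + 1) / 2 * 2 = a * (a + 1) :=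
    Nat.div_mul_cancel (Nat.even_mul_succ_self a).two_dvd
  have key : (2 * e + a) * (a + 1) + a * (a + 1) = 2 * ((a + 1) * (a + e)) := by ring
  have hP : (a + 1) * (a + e) =
      (∑ i ∈ Finset.Icc e (a + e), i) + a * (a + 1) / 2 := by linarith
  rw [hP, Nat.add_sub_cancel]

end MacaulayAux

/-- For integers `n ≥ 1`, `a, b ≥ 0` with `b ≤ n - a - 1`:
`N(n; a, b)^{-<n>} = N(n-1; a, b)` if `n - a - b ≥ 2`, and
`N(n; a, b)^{-<n>} = N(n-1; a, b-1)` if `n - a - b = 1` and `b ≥ 1`. -/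
theorem macaulay_minus_Nval (n a b : ℕ) (hn : 1 ≤ n) (hab : a + b + 1 ≤ n) :
    ∀ v, IsMacaulayMinus (Nval n a b) n v →
      (a + b + 2 ≤ n → v = Nval (n - 1) a b) ∧
      (a + b + 1 = n → 1 ≤ b → v = Nval (n - 1) a (b - 1)) := by
  intro v hv
  -- the canonical representation
  have hcan : Nval n a b = ∑ j ∈ Finset.Icc (n - a - b) n, Nat.choose (dfun (n - a) j) j := by
    rw [icc_split_aux _ (n - a - b) (n - a) n (by omega) (by omega) (by omega)]
    have c1 : ∑ j ∈ Finset.Icc (n - a - b) (n - a - 1), Nat.choose (dfun (n - a) j) j =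
        ∑ j ∈ Finset.Icc (n - a - b) (n - a - 1), 1 := by
      refine Finset.sum_congr rfl fun j hj => ?_
      simp only [Finset.mem_Icc] at hj
      have h1 : j < n - a := by omega
      simp only [dfun, if_pos h1, Nat.choose_self]
    have c2 : ∑ j ∈ Finset.Icc (n - a) n, Nat.choose (dfun (n - a) j) j =
        ∑ j ∈ Finset.Icc (n - a) n, (j + 1) := by
      refine Finset.sum_congr rfl fun j hj => ?_
      simp only [Finset.mem_Icc] at hj
      simp only [dfun, if_neg (show ¬ j < n - a by omega)]
      exact Nat.choose_succ_self_right j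
    rw [c1, c2, Finset.sum_const, smul_eq_mul, mul_one, Nat.card_Icc,
      gauss1 a n (by omega), show n - a - 1 + 1 - (n - a - b) = b by omega]
    simp only [Nval]
    exact Nat.add_comm _ _
  have hrep : IsMacaulayRep (Nval n a b) n (n - a - b) (dfun (n - a)) := by
    refine ⟨by omega, by omega, fun j h1 h2 => ?_, fun j h1 h2 => ?_, hcan⟩
    · simp only [dfun]; split_ifs <;> omega
    · simp only [dfun]; split_ifs <;> omega
  have hA0 : Nval n a b ≠ 0 := by
    rw [hcan]
    have hpos : 0 < ∑ j ∈ Finset.Icc (n - a - b) n, Nat.choose (dfun (n - a) j) j := by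
      refine Finset.sum_pos (fun i hi => Nat.choose_pos ?_) (Finset.nonempty_Icc.mpr (by omega))
      simp only [dfun]; split_ifs <;> omega
    omega
  rcases hv with ⟨h0, _⟩ | ⟨δ, c, hc, hvdef⟩
  · exact absurd h0 hA0
  obtain ⟨hδe, hce⟩ := rep_unique_aux n (Nval n a b) (n - a - b) (dfun (n - a)) δ c hrep hc
  have hveq : v = ∑ j ∈ Finset.Icc (n - a - b) n, mchoose (dfun (n - a) j - 1) (j - 1) := by
    rw [hvdef, ← hδe]
    refine Finset.sum_congr rfl fun j hj => ?_
    simp only [Finset.mem_Icc] at hj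
    rw [hce j hj.1 hj.2]
  have k2 : 2 ≤ n - a →
      ∑ j ∈ Finset.Icc (n - a) n, mchoose (dfun (n - a) j - 1) (j - 1) =
        (a + 1) * n - a * (a + 1) / 2 := by
    intro h2
    have ctrans : ∑ j ∈ Finset.Icc (n - a) n, mchoose (dfun (n - a) j - 1) (j - 1) =
        ∑ j ∈ Finset.Icc (n - a) n, j := by
      refine Finset.sum_congr rfl fun j hj => ?_
      simp only [Finset.mem_Icc] at hj
      simp only [dfun, if_neg (show ¬ j < n - a by omega), Nat.add_sub_cancel]
      rw [mchoose, if_neg (by omega)]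
      have hs : j - (j - 1) = 1 := by omega
      rw [← Nat.choose_symm (Nat.sub_le j 1), hs, Nat.choose_one_right]
    rw [ctrans]
    exact gauss2 a n (by omega)
  constructor
  · intro hcase
    rw [hveq, icc_split_aux _ (n - a - b) (n - a) n (by omega) (by omega) (by omega),
      k2 (by omega)]
    have k1 : ∑ j ∈ Finset.Icc (n - a - b) (n - a - 1), mchoose (dfun (n - a) j - 1) (j - 1) =
        ∑ j ∈ Finset.Icc (n - a - b) (n - a - 1), 1 := by
      refine Finset.sum_congr rfl fun j hj => ?_
      simp only [Finset.mem_Icc] at hj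
      simp only [dfun, if_pos (show j < n - a by omega)]
      rw [mchoose, if_neg (by omega), Nat.choose_self]
    rw [k1, Finset.sum_const, smul_eq_mul, mul_one, Nat.card_Icc,
      show n - a - 1 + 1 - (n - a - b) = b by omega]
    simp only [Nval, show n - 1 + 1 = n by omega]
    generalize (a + 1) * n - a * (a + 1) / 2 = X
    omega
  · intro hcase hb1
    rw [hveq, icc_split_aux _ (n - a - b) (n - a) n (by omega) (by omega) (by omega),
      k2 (by omega), show n - a - b = 1 by omega,
      icc_split_aux _ 1 2 (n - a - 1) (by omega) (by omega) (by omega)]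
    have k0 : ∑ j ∈ Finset.Icc 1 (2 - 1), mchoose (dfun (n - a) j - 1) (j - 1) = 0 := by
      rw [show (2 : ℕ) - 1 = 1 by omega, Finset.Icc_self, Finset.sum_singleton]
      simp [mchoose]
    have k1 : ∑ j ∈ Finset.Icc 2 (n - a - 1), mchoose (dfun (n - a) j - 1) (j - 1) =
        ∑ j ∈ Finset.Icc 2 (n - a - 1), 1 := by
      refine Finset.sum_congr rfl fun j hj => ?_
      simp only [Finset.mem_Icc] at hj
      simp only [dfun, if_pos (show j < n - a by omega)]
      rw [mchoose, if_neg (by omega), Nat.choose_self]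
    rw [k0, k1, Finset.sum_const, smul_eq_mul, mul_one, Nat.card_Icc,
      show n - a - 1 + 1 - 2 = b - 1 by omega]
    simp only [Nval, show n - 1 + 1 = n by omega]
    generalize (a + 1) * n - a * (a + 1) / 2 = X
    omega
end

section
/- Let n ≥ 1, a ≥ 0, b ≥ 0 be integers with b ≤ n − a − 1. Then the n-th Macaulay representation of N(n; a, 0) is C(n+1, n) + C(n, n−1) + ... + C(n−a+1, n−a), and for b ≥ 1 the n-th Macaulay representation of N(n; a, b) is C(n+1, n) + C(n, n−1) + ... + C(n−a+1, n−a) + C(n−a−1, n−a−1) + C(n−a−2, n−a−2) + ... + C(n−a−b, n−a−b). -/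
lemma sum_formula (n a : ℕ) (h : a ≤ n) :
    ∑ j ∈ Finset.Icc (n - a) n, (j + 1) = (a + 1) * (n + 1) - a * (a + 1) / 2 := by
  induction a with
  | zero => simp
  | succ a ih =>
    have hs := ih (by omega)
    have hins : Finset.Icc (n - (a+1)) n = insert (n - (a+1)) (Finset.Icc (n - a) n) := by
      ext x; simp only [Finset.mem_Icc, Finset.mem_insert]; omega
    have hnotin : n - (a+1) ∉ Finset.Icc (n - a) n := by
      simp only [Finset.mem_Icc]; omega
    rw [hins, Finset.sum_insert hnotin, hs]
    have e1 : (a+1+1)*(n+1) = (a+1)*(n+1) + (n+1) := by ring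
    have e2 : (a+1)*(a+1+1) = a*(a+1) + 2*(a+1) := by ring
    have h2 : a*(a+1) % 2 = 0 := Nat.even_iff.mp (Nat.even_mul_succ_self a)
    have h3 : a*(a+1)/2 ≤ (a+1)*(n+1) := by
      calc a*(a+1)/2 ≤ a*(a+1) := Nat.div_le_self _ _
        _ ≤ (a+1)*(n+1) := Nat.mul_le_mul (by omega) (by omega)
    omega


/-- For integers `n ≥ 1`, `a, b ≥ 0` with `b ≤ n - a - 1`, the `n`-th Macaulay
representation of `N(n; a, 0)` is `C(n+1, n) + ⋯ + C(n-a+1, n-a)`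
(so `δ = n - a` and `a_j = j + 1` for `n - a ≤ j ≤ n`), and for `b ≥ 1` the
`n`-th Macaulay representation of `N(n; a, b)` is
`C(n+1, n) + ⋯ + C(n-a+1, n-a) + C(n-a-1, n-a-1) + ⋯ + C(n-a-b, n-a-b)`
(so `δ = n - a - b`, `a_j = j + 1` for `n - a ≤ j ≤ n` and `a_j = j` for
`n - a - b ≤ j ≤ n - a - 1`). -/
theorem macaulay_rep_Nval (n a b : ℕ) (hn : 1 ≤ n) (hab : a + b + 1 ≤ n) :
    (b = 0 → IsMacaulayRep (Nval n a 0) n (n - a) (fun j => j + 1)) ∧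
    (1 ≤ b → IsMacaulayRep (Nval n a b) n (n - a - b)
      (fun j => if n - a ≤ j then j + 1 else j)) := by
  constructor
  · intro hb
    refine ⟨by omega, by omega, fun j _ _ => by simp, fun j _ _ => by simp, ?_⟩
    have : ∀ j ∈ Finset.Icc (n-a) n, Nat.choose (j+1) j = j + 1 := by
      intro j _; exact Nat.choose_succ_self_right j
    rw [Finset.sum_congr rfl this, sum_formula n a (by omega)]
    simp [Nval]
  · intro hb
    refine ⟨by omega, by omega, fun j hj _ => by dsimp; split <;> omega,
      fun j hj hjn => by dsimp; split <;> split <;> omega, ?_⟩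
    have hsplit : Finset.Icc (n-a-b) n = Finset.Ico (n-a-b) (n-a) ∪ Finset.Ico (n-a) (n+1) := by
      ext x; simp only [Finset.mem_Icc, Finset.mem_union, Finset.mem_Ico]; omega
    have hdisj : Disjoint (Finset.Ico (n-a-b) (n-a)) (Finset.Ico (n-a) (n+1)) := by
      simp only [Finset.disjoint_left, Finset.mem_Ico]; omega
    rw [hsplit, Finset.sum_union hdisj]
    have h1 : ∀ j ∈ Finset.Ico (n-a-b) (n-a),
        Nat.choose ((fun j => if n - a ≤ j then j + 1 else j) j) j = 1 := by
      intro j hj; simp only [Finset.mem_Ico] at hj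
      have hx : ¬ n - a ≤ j := by omega
      simp [hx]
    have h2 : ∀ j ∈ Finset.Ico (n-a) (n+1),
        Nat.choose ((fun j => if n - a ≤ j then j + 1 else j) j) j = j + 1 := by
      intro j hj; simp only [Finset.mem_Ico] at hj
      have hx : n - a ≤ j := by omega
      simp [hx, Nat.choose_succ_self_right]
    rw [Finset.sum_congr rfl h1, Finset.sum_congr rfl h2, Finset.sum_const,
      Finset.Ico_add_one_right_eq_Icc, sum_formula n a (by omega)]
    have hc : (Finset.Ico (n-a-b) (n-a)).card = b := by
      rw [Nat.card_Ico]; omega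
    rw [hc]
    have h3 : a*(a+1)/2 ≤ (a+1)*(n+1) := by
      calc a*(a+1)/2 ≤ a*(a+1) := Nat.div_le_self _ _
        _ ≤ (a+1)*(n+1) := Nat.mul_le_mul (by omega) (by omega)
    simp [Nval]; omega
end
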